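/- arXiv:1504.06488 — 4 statements merged into one kernel-verified Lean document; each statement's English description precedes it below -/
import Mathlib

section
/- Let q̄ ∈ ℝ^r have strictly positive entries and suppose R(q̄) = {z ∈ ℝⁿ : P z ≤ q̄} is a polytope containing the origin in its interior. Then R(q̄) is robust positively invariant for the system x⁺ = A x + w, w ∈ W, if and only if there exist entrywise-nonnegative matrices H ∈ ℝ^{r×r} and M ∈ ℝ^{r×p} such that H P = P A, M F = P, and H q̄ + M g ≤ q̄ (componentwise). -/
open Matrix

section AuxFarkas
open Finset

lemma conic_caratheodory {ι : Type*} [Fintype ι] {E : Type*} [AddCommGroup E] [Module ℝ E]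
    (v : ι → E) :
    ∀ (s : Finset ι) (c : ι → ℝ), (∀ i, 0 ≤ c i) →
    ∃ (t : Finset ι) (d : ι → ℝ), t ⊆ s ∧ LinearIndependent ℝ (fun i : t => v i) ∧
      (∀ i, 0 ≤ d i) ∧ (∀ i ∉ t, d i = 0) ∧ ∑ i ∈ t, d i • v i = ∑ i ∈ s, c i • v i := by
  classical
  intro s
  induction s using Finset.strongInductionOn with
  | _ s ih =>
    intro c hc
    by_cases hLI : LinearIndependent ℝ (fun i : s => v i)
    · refine ⟨s, fun i => if i ∈ s then c i else 0, subset_rfl, hLI, ?_, ?_, ?_⟩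
      · intro i; dsimp only; split <;> simp [hc i]
      · intro i hi; simp [hi]
      · exact Finset.sum_congr rfl fun i hi => by simp [hi]
    · -- key step, assuming a coefficient vector d with a positive entry on s
      have key : ∀ d : ι → ℝ, (∀ i ∉ s, d i = 0) → ∑ i ∈ s, d i • v i = 0 →
          (∃ i ∈ s, 0 < d i) → ∃ (t : Finset ι) (d' : ι → ℝ), t ⊆ s ∧
          LinearIndependent ℝ (fun i : t => v i) ∧ (∀ i, 0 ≤ d' i) ∧ (∀ i ∉ t, d' i = 0) ∧
          ∑ i ∈ t, d' i • v i = ∑ i ∈ s, c i • v i := by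
        rintro d hd0 hdsum ⟨i₁, hi₁s, hi₁pos⟩
        obtain ⟨i₀, hi₀mem, hi₀min⟩ :=
          Finset.exists_min_image (s.filter (fun i => 0 < d i)) (fun i => c i / d i)
            ⟨i₁, Finset.mem_filter.mpr ⟨hi₁s, hi₁pos⟩⟩
        obtain ⟨hi₀s, hi₀pos⟩ := Finset.mem_filter.mp hi₀mem
        set τ : ℝ := c i₀ / d i₀ with hτ
        have hτ0 : 0 ≤ τ := div_nonneg (hc i₀) hi₀pos.le
        set c' : ι → ℝ := fun i => c i - τ * d i with hc'
        have hc'0 : ∀ i ∈ s, 0 ≤ c' i := by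
          intro i his
          simp only [hc', sub_nonneg]
          rcases lt_or_ge 0 (d i) with hdi | hdi
          · have hmin := hi₀min i (Finset.mem_filter.mpr ⟨his, hdi⟩)
            calc τ * d i ≤ c i / d i * d i :=
                  mul_le_mul_of_nonneg_right hmin hdi.le
              _ = c i := div_mul_cancel₀ _ hdi.ne'
          · exact le_trans (mul_nonpos_of_nonneg_of_nonpos hτ0 hdi) (hc i)
        have hc'i₀ : c' i₀ = 0 := by
          simp only [hc', hτ, div_mul_cancel₀ _ hi₀pos.ne', sub_self]
        have hsum' : ∑ i ∈ s.erase i₀, (fun i => if i ∈ s then c' i else 0) i • v i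
            = ∑ i ∈ s, c i • v i := by
          rw [Finset.sum_erase _ (by simp [hi₀s, hc'i₀])]
          have : ∑ i ∈ s, (if i ∈ s then c' i else 0) • v i = ∑ i ∈ s, c' i • v i :=
            Finset.sum_congr rfl fun i hi => by simp [hi]
          rw [this]
          have : ∑ i ∈ s, c' i • v i = ∑ i ∈ s, c i • v i - τ • ∑ i ∈ s, d i • v i := by
            rw [Finset.smul_sum, ← Finset.sum_sub_distrib]
            refine Finset.sum_congr rfl fun i hi => ?_
            simp [hc', sub_smul, mul_smul]
          rw [this, hdsum, smul_zero, sub_zero]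
        obtain ⟨t, d', hts, hLIt, hd'0, hd'supp, hd'sum⟩ :=
          ih (s.erase i₀) (Finset.erase_ssubset hi₀s) (fun i => if i ∈ s then c' i else 0)
            (fun i => by
              by_cases h : i ∈ s
              · simpa [h] using hc'0 i h
              · simp [h])
        exact ⟨t, d', hts.trans (Finset.erase_subset _ _), hLIt, hd'0, hd'supp,
          hd'sum.trans hsum'⟩
      obtain ⟨g, hg0, j, hgj⟩ := Fintype.not_linearIndependent_iff.mp hLI
      set d : ι → ℝ := fun i => if h : i ∈ s then g ⟨i, h⟩ else 0 with hd
      have hdsupp : ∀ i ∉ s, d i = 0 := fun i hi => by simp [hd, hi]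
      have hdsum : ∑ i ∈ s, d i • v i = 0 := by
        rw [← hg0, ← Finset.sum_attach s (fun i => d i • v i)]
        exact Finset.sum_congr rfl fun i _ => by simp [hd, i.2]
      have hdj : d (j : ι) ≠ 0 := by simpa [hd, j.2] using hgj
      rcases lt_or_gt_of_ne hdj with hneg | hpos
      · exact key (-d) (fun i hi => by simp [hdsupp i hi])
          (by simpa [neg_smul] using congrArg Neg.neg hdsum)
          ⟨j, j.2, by simpa using hneg⟩
      · exact key d hdsupp hdsum ⟨j, j.2, hpos⟩

lemma fg_cone_isClosed {ι : Type*} [Fintype ι] {E : Type*} [NormedAddCommGroup E]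
    [InnerProductSpace ℝ E] [FiniteDimensional ℝ E] (v : ι → E) :
    IsClosed {x : E | ∃ c : ι → ℝ, (∀ i, 0 ≤ c i) ∧ ∑ i, c i • v i = x} := by
  classical
  have hrepr : {x : E | ∃ c : ι → ℝ, (∀ i, 0 ≤ c i) ∧ ∑ i, c i • v i = x} =
      ⋃ t ∈ {t : Finset ι | LinearIndependent ℝ (fun i : t => v i)},
        {x : E | ∃ c : t → ℝ, (∀ i, 0 ≤ c i) ∧ ∑ i, c i • v (i : ι) = x} := by
    ext x
    simp only [Set.mem_setOf_eq, Set.mem_iUnion]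
    constructor
    · rintro ⟨c, hc0, hcs⟩
      obtain ⟨t, d, -, hLI, hd0, hdsupp, hdsum⟩ := conic_caratheodory v Finset.univ c hc0
      refine ⟨t, hLI, fun i => d i, fun i => hd0 i, ?_⟩
      rw [← hcs, ← hdsum, ← Finset.sum_attach t (fun i => d i • v i), Finset.univ_eq_attach]
    · rintro ⟨t, hLI, c, hc0, hcs⟩
      refine ⟨fun i => if h : i ∈ t then c ⟨i, h⟩ else 0, fun i => by dsimp; split <;> simp [hc0], ?_⟩
      rw [← hcs]
      calc ∑ i, (if h : i ∈ t then c ⟨i, h⟩ else 0) • v i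
          = ∑ i ∈ t, (if h : i ∈ t then c ⟨i, h⟩ else 0) • v i :=
            (Finset.sum_subset (Finset.subset_univ t) (fun i _ hi => by simp [hi])).symm
        _ = ∑ i ∈ t.attach, (if h : (i : ι) ∈ t then c ⟨i, h⟩ else 0) • v (i : ι) :=
            (Finset.sum_attach _ _).symm
        _ = ∑ i : t, c i • v (i : ι) := by
            rw [Finset.univ_eq_attach]
            exact Finset.sum_congr rfl fun i _ => by simp [i.2]
  rw [hrepr]
  refine Set.Finite.isClosed_biUnion (Set.toFinite _) fun t ht => ?_
  -- image of the nonnegative orthant under an injective linear map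
  set L : (t → ℝ) →ₗ[ℝ] E := Fintype.linearCombination ℝ (fun i : t => v i) with hL
  have hLker : LinearMap.ker L = ⊥ := by
    rw [LinearMap.ker_eq_bot']
    intro m hm
    have h2 := Fintype.linearIndependent_iff.mp ht m
      (by simpa [hL, Fintype.linearCombination_apply] using hm)
    exact funext h2
  have hemb := LinearMap.isClosedEmbedding_of_injective (F := E) hLker
  have himg : {x : E | ∃ c : t → ℝ, (∀ i, 0 ≤ c i) ∧ ∑ i, c i • v (i : ι) = x}
      = L '' {c : t → ℝ | ∀ i, 0 ≤ c i} := by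
    ext x
    simp only [Set.mem_setOf_eq, Set.mem_image, hL, Fintype.linearCombination_apply]
  rw [himg]
  have hcl : IsClosed {c : t → ℝ | ∀ i, 0 ≤ c i} := by
    have : {c : t → ℝ | ∀ i, 0 ≤ c i} = ⋂ i, {c : t → ℝ | 0 ≤ c i} := by
      ext c; simp [Set.mem_iInter]
    rw [this]
    exact isClosed_iInter fun i => isClosed_le continuous_const (continuous_apply i)
  exact hemb.isClosedMap _ hcl

lemma farkas_aux {m n : ℕ} (Pm : Matrix (Fin m) (Fin n) ℝ) (q : Fin m → ℝ)
    (x₀ : Fin n → ℝ) (hx₀ : Pm.mulVec x₀ ≤ q)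
    (c : Fin n → ℝ) (v : ℝ) (hcv : ∀ x : Fin n → ℝ, Pm.mulVec x ≤ q → c ⬝ᵥ x ≤ v) :
    ∃ y : Fin m → ℝ, (∀ i, 0 ≤ y i) ∧ (∀ j, ∑ i, y i * Pm i j = c j) ∧ y ⬝ᵥ q ≤ v := by
  classical
  set E := EuclideanSpace ℝ (Fin n ⊕ Unit) with hE
  -- embedding of a vector and a scalar into E
  set emb : (Fin n → ℝ) → ℝ → E := fun a t => WithLp.toLp 2 (fun k => Sum.elim a (fun _ => t) k) with hemb
  set ι := (Fin m ⊕ Unit) with hι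
  set w : ι → E := Sum.elim (fun i => emb (fun j => Pm i j) (q i)) (fun _ => emb 0 1) with hw
  set S : Set E := {x : E | ∃ cc : ι → ℝ, (∀ i, 0 ≤ cc i) ∧ ∑ i, cc i • w i = x} with hS
  have hSclosed : IsClosed S := fg_cone_isClosed w
  have hSne : S.Nonempty := ⟨0, 0, fun i => le_refl 0, by simp⟩
  have hwmem : ∀ i : ι, w i ∈ S := by
    intro i
    refine ⟨fun k => if k = i then 1 else 0, fun k => by dsimp; split <;> norm_num, ?_⟩
    simp [Finset.sum_ite_eq', Finset.sum_ite_eq]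
    exact (Finset.sum_eq_single i (fun b _ hb => if_neg hb) (fun h => absurd (Finset.mem_univ i) h)).trans (if_pos rfl)
  -- S as a convex cone
  set K : ConvexCone ℝ E :=
    { carrier := S
      smul_mem' := by
        rintro r hr x ⟨cc, hcc0, hccsum⟩
        exact ⟨fun i => r * cc i, fun i => mul_nonneg hr.le (hcc0 i), by
          rw [← hccsum, Finset.smul_sum]
          exact Finset.sum_congr rfl fun i _ => by rw [mul_smul]⟩
      add_mem' := by
        rintro x ⟨cc, hcc0, hccsum⟩ y ⟨dd, hdd0, hddsum⟩
        exact ⟨fun i => cc i + dd i, fun i => add_nonneg (hcc0 i) (hdd0 i), by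
          rw [← hccsum, ← hddsum, ← Finset.sum_add_distrib]
          exact Finset.sum_congr rfl fun i _ => by rw [add_smul]⟩ } with hK
  have hbmem : emb c v ∈ S := by
    by_contra hb
    obtain ⟨y, hy1, hy2⟩ : ∃ y : E, (∀ x ∈ S, 0 ≤ inner ℝ x y) ∧ inner ℝ y (emb c v) < 0 := by
      obtain ⟨y, h1, h2⟩ := ProperCone.hyperplane_separation'
        (C := (⟨K.toPointedCone ⟨0, fun _ => le_refl 0, by simp⟩, hSclosed⟩ : ProperCone ℝ E)) hb
      exact ⟨y, h1, by rwa [real_inner_comm]⟩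
    set x' : Fin n → ℝ := fun j => y (Sum.inl j) with hx'
    set t : ℝ := y (Sum.inr ()) with ht
    have hinner : ∀ a : Fin n → ℝ, ∀ s : ℝ,
        (inner ℝ (emb a s) y : ℝ) = (∑ j, a j * x' j) + s * t := by
      intro a s
      rw [PiLp.inner_apply]
      simp only [RCLike.inner_apply, conj_trivial]
      rw [Fintype.sum_sum_type]
      simp [hemb, hx', ht]
      exact congrArg₂ (· + ·) (Finset.sum_congr rfl fun j _ => mul_comm _ _) (mul_comm _ _)
    have hrow : ∀ i : Fin m, 0 ≤ (∑ j, Pm i j * x' j) + q i * t := by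
      intro i
      have := hy1 _ (hwmem (Sum.inl i))
      rwa [hw, Sum.elim_inl, hinner] at this
    have htnn : 0 ≤ t := by
      have := hy1 _ (hwmem (Sum.inr ()))
      rw [hw, Sum.elim_inr, hinner] at this
      simpa using this
    have hlt : (∑ j, c j * x' j) + v * t < 0 := by
      have : (inner ℝ y (emb c v) : ℝ) = (inner ℝ (emb c v) y : ℝ) := real_inner_comm _ _
      rw [this, hinner] at hy2
      exact hy2
    rcases eq_or_lt_of_le htnn with ht0 | htpos
    · -- t = 0 case
      set Sc := ∑ j, c j * x' j with hSc
      have hScneg : Sc < 0 := by simpa [← ht0] using hlt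
      set lam : ℝ := (|v - c ⬝ᵥ x₀| + 1) / (-Sc) with hlam
      have hlam0 : 0 ≤ lam := div_nonneg (by positivity) (by linarith)
      set z : Fin n → ℝ := fun j => x₀ j - lam * x' j with hz
      have hzfeas : Pm.mulVec z ≤ q := by
        intro i
        have h1 : 0 ≤ ∑ j, Pm i j * x' j := by
          have := hrow i; rw [← ht0] at this; simpa using this
        have h2 : (Pm.mulVec z) i = (Pm.mulVec x₀) i - lam * ∑ j, Pm i j * x' j := by
          simp only [Matrix.mulVec, dotProduct, hz, Finset.mul_sum, ← Finset.sum_sub_distrib]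
          exact Finset.sum_congr rfl fun j _ => by ring
        rw [h2]
        have := hx₀ i
        nlinarith [mul_nonneg hlam0 h1]
      have hcz : c ⬝ᵥ z ≤ v := hcv z hzfeas
      have hczval : c ⬝ᵥ z = c ⬝ᵥ x₀ + (|v - c ⬝ᵥ x₀| + 1) := by
        have h3 : c ⬝ᵥ z = c ⬝ᵥ x₀ - lam * Sc := by
          simp only [dotProduct, hz, hSc, Finset.mul_sum, ← Finset.sum_sub_distrib]
          exact Finset.sum_congr rfl fun j _ => by ring
        have h4 : lam * Sc = -(|v - c ⬝ᵥ x₀| + 1) := by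
          rw [hlam, div_mul_eq_mul_div, div_eq_iff (by linarith : -Sc ≠ 0)]
          ring
        rw [h3, h4]
        ring
      rw [hczval] at hcz
      cases abs_cases (v - c ⬝ᵥ x₀) with
      | inl h => linarith [h.1]
      | inr h => linarith [h.1]
    · -- t > 0 case
      set z : Fin n → ℝ := fun j => -t⁻¹ * x' j with hz
      have hzfeas : Pm.mulVec z ≤ q := by
        intro i
        have h2 : (Pm.mulVec z) i = -t⁻¹ * ∑ j, Pm i j * x' j := by
          simp only [Matrix.mulVec, dotProduct, hz, Finset.mul_sum]
          exact Finset.sum_congr rfl fun j _ => by ring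
        rw [h2, neg_mul]
        have h1 := hrow i
        have h4 : 0 ≤ t⁻¹ * ((∑ j, Pm i j * x' j) + q i * t) :=
          mul_nonneg (inv_pos.mpr htpos).le h1
        have h5 : t⁻¹ * ((∑ j, Pm i j * x' j) + q i * t)
            = t⁻¹ * (∑ j, Pm i j * x' j) + q i := by
          field_simp
        rw [h5] at h4
        linarith
      have hcz : c ⬝ᵥ z ≤ v := hcv z hzfeas
      have h3 : c ⬝ᵥ z = -t⁻¹ * ∑ j, c j * x' j := by
        simp only [dotProduct, hz, Finset.mul_sum]
        exact Finset.sum_congr rfl fun j _ => by ring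
      rw [h3] at hcz
      have h4 := mul_le_mul_of_nonneg_right hcz htpos.le
      have h5 : (-t⁻¹ * (∑ j, c j * x' j)) * t = -(∑ j, c j * x' j) := by
        field_simp
      rw [h5] at h4
      linarith
  -- extract the dual multipliers
  obtain ⟨cc, hcc0, hccsum⟩ := hbmem
  have hsing : ∀ (x : E) (k : Fin n ⊕ Unit),
      (inner ℝ x (EuclideanSpace.single k (1:ℝ)) : ℝ) = x k := by
    intro x k
    rw [PiLp.inner_apply]
    simp [EuclideanSpace.single_apply, mul_ite, Finset.sum_ite_eq']
  have hcomp : ∀ k : Fin n ⊕ Unit, (∑ i : ι, cc i * w i k) = emb c v k := by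
    intro k
    have h := congrArg (fun x : E => (inner ℝ x (EuclideanSpace.single k (1:ℝ)) : ℝ)) hccsum
    simp only [sum_inner, real_inner_smul_left, E] at h
    simp only [hsing] at h
    exact h
  refine ⟨fun i => cc (Sum.inl i), fun i => hcc0 _, ?_, ?_⟩
  · intro j
    have h := hcomp (Sum.inl j)
    rw [Fintype.sum_sum_type] at h
    simp only [hw, hemb, Sum.elim_inl, Sum.elim_inr] at h
    simpa using h
  · have h := hcomp (Sum.inr ())
    rw [Fintype.sum_sum_type] at h
    simp only [hw, hemb, Sum.elim_inl, Sum.elim_inr] at h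
    have hs : 0 ≤ ∑ i : Unit, cc (Sum.inr i) := Finset.sum_nonneg fun i _ => hcc0 _
    simp only [dotProduct]
    have h2 : (∑ i, cc (Sum.inl i) * q i) + ∑ i : Unit, cc (Sum.inr i) = v := by
      simpa using h
    linarith

end AuxFarkas


/-- `R(q̄) = {z : P z ≤ q̄}` (a polytope with `0` in its interior) is
robust positively invariant for `x⁺ = A x + w`, `w ∈ W = {w : F w ≤ g}`, iff there exist
entrywise-nonnegative matrices `H`, `M` with `H P = P A`, `M F = P` and
`H q̄ + M g ≤ q̄`. -/
theorem rpi_iff_exists_nonneg_matrices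
    (n r p : ℕ)
    (A : Matrix (Fin n) (Fin n) ℝ)
    (F : Matrix (Fin p) (Fin n) ℝ) (g : Fin p → ℝ)
    (hg : ∀ j, 0 < g j)
    (W : Set (Fin n → ℝ)) (hW : W = {w : Fin n → ℝ | F.mulVec w ≤ g})
    (hWcompact : IsCompact W)
    (P : Matrix (Fin r) (Fin n) ℝ)
    (hspan : Submodule.span ℝ (Set.range fun i => P i) = ⊤)
    (qbar : Fin r → ℝ) (hqbar : ∀ i, 0 < qbar i)
    (hRcompact : IsCompact {z : Fin n → ℝ | P.mulVec z ≤ qbar})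
    (hR0 : (0 : Fin n → ℝ) ∈ interior {z : Fin n → ℝ | P.mulVec z ≤ qbar}) :
    (∀ x ∈ {z : Fin n → ℝ | P.mulVec z ≤ qbar}, ∀ w ∈ W,
        A.mulVec x + w ∈ {z : Fin n → ℝ | P.mulVec z ≤ qbar}) ↔
    (∃ (H : Matrix (Fin r) (Fin r) ℝ) (M : Matrix (Fin r) (Fin p) ℝ),
        (∀ i j, 0 ≤ H i j) ∧ (∀ i j, 0 ≤ M i j) ∧
        H * P = P * A ∧ M * F = P ∧ H.mulVec qbar + M.mulVec g ≤ qbar) := by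
  classical
  have h0S : (0 : Fin n → ℝ) ∈ {z : Fin n → ℝ | P.mulVec z ≤ qbar} := by
    simp only [Set.mem_setOf_eq, Matrix.mulVec_zero]
    exact fun i => (hqbar i).le
  have h0W : (0 : Fin n → ℝ) ∈ W := by
    rw [hW]
    simp only [Set.mem_setOf_eq, Matrix.mulVec_zero]
    exact fun j => (hg j).le
  constructor
  · -- forward direction
    intro hRPI
    have hdcont : ∀ c : Fin n → ℝ, Continuous fun x : Fin n → ℝ => c ⬝ᵥ x := by
      intro c
      simp only [dotProduct]
      exact continuous_finset_sum _ fun j _ => (continuous_const.mul (continuous_apply j))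
    have main : ∀ i : Fin r, ∃ (yi : Fin r → ℝ) (mi : Fin p → ℝ),
        (∀ k, 0 ≤ yi k) ∧ (∀ k, 0 ≤ mi k) ∧ (∀ j, ∑ k, yi k * P k j = (P * A) i j) ∧
        (∀ j, ∑ k, mi k * F k j = P i j) ∧ yi ⬝ᵥ qbar + mi ⬝ᵥ g ≤ qbar i := by
      intro i
      set c1 : Fin n → ℝ := fun j => (P * A) i j with hc1
      set c2 : Fin n → ℝ := fun j => P i j with hc2
      obtain ⟨xs, hxsS, hxsmax⟩ := hRcompact.exists_isMaxOn ⟨0, h0S⟩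
        ((hdcont c1).continuousOn)
      obtain ⟨ws, hwsW, hwsmax⟩ := hWcompact.exists_isMaxOn ⟨0, h0W⟩
        ((hdcont c2).continuousOn)
      set v1 : ℝ := c1 ⬝ᵥ xs with hv1
      set v2 : ℝ := c2 ⬝ᵥ ws with hv2
      have hkey : v1 + v2 ≤ qbar i := by
        have h := hRPI xs hxsS ws hwsW i
        have h1 : P.mulVec (A.mulVec xs + ws) i = v1 + v2 := by
          rw [Matrix.mulVec_add, Matrix.mulVec_mulVec]
          rfl
        rw [h1] at h
        exact h
      obtain ⟨yi, hyi0, hyiP, hyiq⟩ := farkas_aux P qbar 0 h0S c1 v1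
        (fun x hx => hxsmax (by exact hx))
      have h0W2 : F.mulVec (0 : Fin n → ℝ) ≤ g := by
        have h' := h0W; rw [hW] at h'; exact h'
      obtain ⟨mi, hmi0, hmiF, hmig⟩ := farkas_aux F g 0 h0W2 c2 v2
        (fun x hx => hwsmax (by rw [hW]; exact hx))
      exact ⟨yi, mi, hyi0, hmi0, hyiP, hmiF, by linarith⟩
    choose y mm h1 h2 h3 h4 h5 using main
    refine ⟨Matrix.of (fun i => y i), Matrix.of (fun i => mm i), fun i j => h1 i j,
      fun i j => h2 i j, ?_, ?_, ?_⟩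
    · ext i j
      rw [Matrix.mul_apply]
      exact h3 i j
    · ext i j
      rw [Matrix.mul_apply]
      exact h4 i j
    · intro i
      exact h5 i
  · -- backward direction
    rintro ⟨H, M, hH, hM, hHP, hMF, hle⟩ x hx w hw
    rw [hW] at hw
    intro i
    have hx' : ∀ k, (P.mulVec x) k ≤ qbar k := hx
    have hw' : ∀ k, (F.mulVec w) k ≤ g k := hw
    have eA : P.mulVec (A.mulVec x) = H.mulVec (P.mulVec x) := by
      rw [Matrix.mulVec_mulVec, ← hHP, ← Matrix.mulVec_mulVec]
    have eB : P.mulVec w = M.mulVec (F.mulVec w) := by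
      rw [Matrix.mulVec_mulVec, hMF]
    have e1 : P.mulVec (A.mulVec x + w) i
        = (H.mulVec (P.mulVec x)) i + (M.mulVec (F.mulVec w)) i := by
      rw [Matrix.mulVec_add, eA, eB]
      rfl
    have e2 : (H.mulVec (P.mulVec x)) i ≤ (H.mulVec qbar) i := by
      simp only [Matrix.mulVec, dotProduct]
      apply Finset.sum_le_sum
      intro k _
      exact mul_le_mul_of_nonneg_left (hx' k) (hH i k)
    have e3 : (M.mulVec (F.mulVec w)) i ≤ (M.mulVec g) i := by
      simp only [Matrix.mulVec, dotProduct]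
      apply Finset.sum_le_sum
      intro k _
      exact mul_le_mul_of_nonneg_left (hw' k) (hM i k)
    have := hle i
    simp only [Pi.add_apply] at this
    rw [e1]
    linarith
end

section
/- The functions b : ℝ^r_{≥0} → ℝ^r_{≥0} and c : ℝ^r_{≥0} → ℝ^r_{≥0} are continuous on the nonnegative orthant. -/
open Matrix

/-- Support function `h(X, v) = sup {vᵀ x : x ∈ X}`. -/
noncomputable def suppFn {n : ℕ} (X : Set (Fin n → ℝ)) (v : Fin n → ℝ) : ℝ :=
  sSup ((fun x => v ⬝ᵥ x) '' X)

/-- `R(q) = {z : P z ≤ q}`. -/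
def Rset {n r : ℕ} (P : Matrix (Fin r) (Fin n) ℝ) (q : Fin r → ℝ) : Set (Fin n → ℝ) :=
  {z : Fin n → ℝ | P.mulVec z ≤ q}

/-- `b_i(q) = h(R(q), P_iᵀ)`. -/
noncomputable def bfun {n r : ℕ} (P : Matrix (Fin r) (Fin n) ℝ) (q : Fin r → ℝ) :
    Fin r → ℝ :=
  fun i => suppFn (Rset P q) (P i)

/-- `c_i(q) = h(A·R(q), P_iᵀ)`. -/
noncomputable def cfun {n r : ℕ} (A : Matrix (Fin n) (Fin n) ℝ)
    (P : Matrix (Fin r) (Fin n) ℝ) (q : Fin r → ℝ) : Fin r → ℝ :=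
  fun i => suppFn (A.mulVec '' Rset P q) (P i)

section Aux

variable {n r : ℕ} (P : Matrix (Fin r) (Fin n) ℝ)

lemma cont_mulVec_comp (i : Fin r) : Continuous fun z : Fin n → ℝ => P.mulVec z i := by
  simp only [Matrix.mulVec, dotProduct]
  exact continuous_finset_sum _ fun j _ => continuous_const.mul (continuous_apply j)

lemma cont_dot (v : Fin n → ℝ) : Continuous fun z : Fin n → ℝ => v ⬝ᵥ z := by
  simp only [dotProduct]
  exact continuous_finset_sum _ fun j _ => continuous_const.mul (continuous_apply j)

lemma zero_mem_Rset {q : Fin r → ℝ} (hq : 0 ≤ q) : (0 : Fin n → ℝ) ∈ Rset P q := by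
  simp [Rset, Matrix.mulVec_zero, hq]

lemma Rset_mono {q q' : Fin r → ℝ} (h : q ≤ q') : Rset P q ⊆ Rset P q' :=
  fun z hz => le_trans hz h

lemma Rset_closed (q : Fin r → ℝ) : IsClosed (Rset P q) := by
  have : Rset P q = ⋂ i, {z : Fin n → ℝ | P.mulVec z i ≤ q i} := by
    ext z; simp [Rset, Pi.le_def, Set.mem_iInter]
  rw [this]
  exact isClosed_iInter fun i => isClosed_le (cont_mulVec_comp P i) continuous_const

/-- Coercivity: from `{z : Pz ≤ 0} = {0}` we get a positive constant `m` with
`m * ‖z‖ ≤ ‖q‖` whenever `z ∈ R(q)` and `q ≥ 0`. -/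
lemma coercive (hP0 : {z : Fin n → ℝ | P.mulVec z ≤ 0} = {0}) :
    ∃ m > (0:ℝ), ∀ q : Fin r → ℝ, 0 ≤ q → ∀ z ∈ Rset P q, m * ‖z‖ ≤ ‖q‖ := by
  set g : (Fin n → ℝ) → ℝ := fun z => ‖(fun i => max (P.mulVec z i) 0 : Fin r → ℝ)‖ with hg
  have gcont : Continuous g := by
    apply Continuous.norm
    exact continuous_pi fun i => (cont_mulVec_comp P i).max continuous_const
  have gpos : ∀ z : Fin n → ℝ, z ≠ 0 → 0 < g z := by
    intro z hz
    have hz' : ¬ (P.mulVec z ≤ 0) := by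
      intro h
      apply hz
      have : z ∈ {z : Fin n → ℝ | P.mulVec z ≤ 0} := h
      rw [hP0] at this
      exact this
    rw [Pi.le_def] at hz'
    push_neg at hz'
    obtain ⟨i, hi⟩ := hz'
    simp only [Pi.zero_apply] at hi
    have h2 : |max (P.mulVec z i) 0| ≤ g z := by
      simpa [Real.norm_eq_abs] using norm_le_pi_norm (fun j => max (P.mulVec z j) 0) i
    have h1 : P.mulVec z i ≤ g z :=
      le_trans (le_trans (le_max_left _ _) (le_abs_self _)) h2
    exact lt_of_lt_of_le hi h1
  have ghom : ∀ (c : ℝ), 0 ≤ c → ∀ z, g (c • z) = c * g z := by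
    intro c hc z
    have : (fun i => max (P.mulVec (c • z) i) 0 : Fin r → ℝ)
        = c • (fun i => max (P.mulVec z i) 0 : Fin r → ℝ) := by
      funext i
      simp only [Matrix.mulVec_smul, Pi.smul_apply, smul_eq_mul]
      rw [mul_max_of_nonneg _ _ hc, mul_zero]
    rw [hg]
    simp only [this, norm_smul, Real.norm_eq_abs, abs_of_nonneg hc, smul_eq_mul]
  have gbound : ∀ q : Fin r → ℝ, 0 ≤ q → ∀ z ∈ Rset P q, g z ≤ ‖q‖ := by
    intro q hq z hzq
    rw [hg]
    rw [pi_norm_le_iff_of_nonneg (norm_nonneg q)]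
    intro i
    show ‖max (P.mulVec z i) 0‖ ≤ ‖q‖
    rw [Real.norm_eq_abs, abs_of_nonneg (le_max_right _ _)]
    have h1 : P.mulVec z i ≤ q i := hzq i
    have h2 : max (P.mulVec z i) 0 ≤ q i := max_le h1 (hq i)
    calc max (P.mulVec z i) 0 ≤ q i := h2
      _ ≤ |q i| := le_abs_self _
      _ = ‖q i‖ := (Real.norm_eq_abs _).symm
      _ ≤ ‖q‖ := norm_le_pi_norm q i
  rcases subsingleton_or_nontrivial (Fin n → ℝ) with hsub | hnt
  · refine ⟨1, one_pos, fun q hq z hz => ?_⟩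
    have : z = 0 := Subsingleton.elim z 0
    simp [this, norm_nonneg]
  · have hsph : (Metric.sphere (0 : Fin n → ℝ) 1).Nonempty :=
      NormedSpace.sphere_nonempty.mpr zero_le_one
    obtain ⟨z₀, hz₀mem, hz₀min⟩ :=
      (isCompact_sphere (0 : Fin n → ℝ) 1).exists_isMinOn hsph gcont.continuousOn
    have hz₀norm : ‖z₀‖ = 1 := by simpa using hz₀mem
    have hz₀ne : z₀ ≠ 0 := by
      intro h; rw [h, norm_zero] at hz₀norm; exact one_ne_zero hz₀norm.symm
    set m : ℝ := g z₀ with hm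
    have hmpos : 0 < m := gpos z₀ hz₀ne
    refine ⟨m, hmpos, fun q hq z hz => ?_⟩
    rcases eq_or_ne z 0 with rfl | hzne
    · simp [norm_nonneg]
    · have hznorm : 0 < ‖z‖ := norm_pos_iff.mpr hzne
      have hu : (‖z‖⁻¹ • z) ∈ Metric.sphere (0 : Fin n → ℝ) 1 := by
        simp [norm_smul, abs_of_nonneg (inv_nonneg.mpr hznorm.le),
          inv_mul_cancel₀ hznorm.ne']
      have h1 : m ≤ g (‖z‖⁻¹ • z) := hz₀min hu
      have h2 : g (‖z‖⁻¹ • z) = ‖z‖⁻¹ * g z := ghom _ (inv_nonneg.mpr hznorm.le) z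
      have h3 : m * ‖z‖ ≤ g z := by
        rw [h2] at h1
        calc m * ‖z‖ ≤ (‖z‖⁻¹ * g z) * ‖z‖ := by nlinarith
          _ = g z := by field_simp
      exact h3.trans (gbound q hq z hz)

lemma Rset_compact (hP0 : {z : Fin n → ℝ | P.mulVec z ≤ 0} = {0}) {q : Fin r → ℝ}
    (hq : 0 ≤ q) : IsCompact (Rset P q) := by
  obtain ⟨m, hm, hbd⟩ := coercive P hP0
  apply Metric.isCompact_of_isClosed_isBounded (Rset_closed P q)
  rw [isBounded_iff_forall_norm_le]
  refine ⟨‖q‖ / m, fun z hz => ?_⟩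
  rw [le_div_iff₀ hm]
  linarith [hbd q hq z hz]

variable {P}

lemma bddAbove_img (hP0 : {z : Fin n → ℝ | P.mulVec z ≤ 0} = {0}) {q : Fin r → ℝ}
    (hq : 0 ≤ q) (v : Fin n → ℝ) : BddAbove ((fun x => v ⬝ᵥ x) '' Rset P q) :=
  ((Rset_compact P hP0 hq).image (cont_dot v)).bddAbove

lemma le_suppFn (hP0 : {z : Fin n → ℝ | P.mulVec z ≤ 0} = {0}) {q : Fin r → ℝ}
    (hq : 0 ≤ q) (v : Fin n → ℝ) {z : Fin n → ℝ} (hz : z ∈ Rset P q) :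
    v ⬝ᵥ z ≤ suppFn (Rset P q) v :=
  le_csSup (bddAbove_img hP0 hq v) ⟨z, hz, rfl⟩

lemma suppFn_nonneg (hP0 : {z : Fin n → ℝ | P.mulVec z ≤ 0} = {0}) {q : Fin r → ℝ}
    (hq : 0 ≤ q) (v : Fin n → ℝ) : 0 ≤ suppFn (Rset P q) v := by
  have := le_suppFn hP0 hq v (zero_mem_Rset P hq)
  simpa using this

lemma suppFn_mono (hP0 : {z : Fin n → ℝ | P.mulVec z ≤ 0} = {0}) {q q' : Fin r → ℝ}
    (hq : 0 ≤ q) (hq' : 0 ≤ q') (h : q ≤ q') (v : Fin n → ℝ) :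
    suppFn (Rset P q) v ≤ suppFn (Rset P q') v := by
  apply csSup_le_csSup (bddAbove_img hP0 hq' v)
  · exact ⟨v ⬝ᵥ 0, 0, zero_mem_Rset P hq, rfl⟩
  · exact Set.image_mono (Rset_mono P h)

/-- Upper semicontinuity along the `𝟙` direction. -/
lemma usc_one (hP0 : {z : Fin n → ℝ | P.mulVec z ≤ 0} = {0}) (v : Fin n → ℝ)
    {q₀ : Fin r → ℝ} (hq₀ : 0 ≤ q₀) {δ : ℝ} (hδ : 0 < δ) :
    ∃ ε > (0:ℝ), ε ≤ 1 ∧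
      suppFn (Rset P (q₀ + fun _ => ε)) v ≤ suppFn (Rset P q₀) v + δ := by
  by_contra hcon
  push_neg at hcon
  set f : (Fin r → ℝ) → ℝ := fun q => suppFn (Rset P q) v with hf
  have key : ∀ k : ℕ, ∃ z ∈ Rset P (q₀ + fun _ => (1:ℝ)/(k+1)),
      f q₀ + δ < v ⬝ᵥ z := by
    intro k
    have hek : (0:ℝ) < 1/(k+1) := by positivity
    have hek1 : (1:ℝ)/(k+1) ≤ 1 := by
      rw [div_le_one (by positivity)]
      have : (0:ℝ) ≤ (k:ℝ) := Nat.cast_nonneg k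
      linarith
    have hlt := hcon (1/(k+1)) hek hek1
    have hqk : 0 ≤ q₀ + fun _ => (1:ℝ)/(k+1) := by
      intro i; simp only [Pi.add_apply]; have := hq₀ i; linarith
    have hne : ((fun x => v ⬝ᵥ x) '' Rset P (q₀ + fun _ => (1:ℝ)/(k+1))).Nonempty :=
      ⟨v ⬝ᵥ 0, 0, zero_mem_Rset P hqk, rfl⟩
    obtain ⟨a, ⟨z, hz, rfl⟩, ha⟩ := exists_lt_of_lt_csSup hne hlt
    exact ⟨z, hz, ha⟩
  choose zseq hzseq hzval using key
  have hq1 : 0 ≤ q₀ + fun _ => (1:ℝ) := by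
    intro i; simp only [Pi.add_apply]; have := hq₀ i; linarith
  have hsub : ∀ k, zseq k ∈ Rset P (q₀ + fun _ => (1:ℝ)) := by
    intro k
    apply Rset_mono P _ (hzseq k)
    intro i
    simp only [Pi.add_apply]
    have h1 : (1:ℝ)/(k+1) ≤ 1 := by
      rw [div_le_one (by positivity)]
      have : (0:ℝ) ≤ (k:ℝ) := Nat.cast_nonneg k
      linarith
    linarith
  obtain ⟨z, hzmem, φ, hφ, hφtend⟩ :=
    (Rset_compact P hP0 hq1).tendsto_subseq hsub
  have hzR : z ∈ Rset P q₀ := by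
    intro i
    have htend1 : Filter.Tendsto (fun k => P.mulVec (zseq (φ k)) i) Filter.atTop
        (nhds (P.mulVec z i)) :=
      ((cont_mulVec_comp P i).continuousAt.tendsto).comp hφtend
    have htend2 : Filter.Tendsto (fun k => q₀ i + (1:ℝ)/(φ k + 1)) Filter.atTop
        (nhds (q₀ i + 0)) := by
      apply Filter.Tendsto.const_add
      exact tendsto_one_div_add_atTop_nhds_zero_nat.comp hφ.tendsto_atTop
    rw [add_zero] at htend2
    refine le_of_tendsto_of_tendsto' htend1 htend2 fun k => ?_
    have := hzseq (φ k) i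
    simpa using this
  have hzup : v ⬝ᵥ z ≤ f q₀ := le_suppFn hP0 hq₀ v hzR
  have hzlow : f q₀ + δ ≤ v ⬝ᵥ z := by
    have htend : Filter.Tendsto (fun k => v ⬝ᵥ zseq (φ k)) Filter.atTop
        (nhds (v ⬝ᵥ z)) := ((cont_dot v).continuousAt.tendsto).comp hφtend
    exact le_of_tendsto_of_tendsto' tendsto_const_nhds htend
      fun k => (hzval (φ k)).le
  linarith

/-- Lower semicontinuity. -/
lemma lsc (hP0 : {z : Fin n → ℝ | P.mulVec z ≤ 0} = {0}) (v : Fin n → ℝ)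
    {q₀ : Fin r → ℝ} (hq₀ : 0 ≤ q₀) {δ : ℝ} (hδ : 0 < δ) :
    ∃ ε > (0:ℝ), ∀ q : Fin r → ℝ, 0 ≤ q → ‖q - q₀‖ < ε →
      suppFn (Rset P q₀) v - δ ≤ suppFn (Rset P q) v := by
  obtain ⟨z₀, hz₀mem, hz₀max⟩ := (Rset_compact P hP0 hq₀).exists_isMaxOn
    ⟨0, zero_mem_Rset P hq₀⟩ (cont_dot v).continuousOn
  have hsup : suppFn (Rset P q₀) v = v ⬝ᵥ z₀ := by
    apply IsGreatest.csSup_eq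
    exact ⟨⟨z₀, hz₀mem, rfl⟩, by rintro a ⟨y, hy, rfl⟩; exact hz₀max hy⟩
  set F : ℝ := v ⬝ᵥ z₀ with hF
  have hFnn : 0 ≤ F := by
    have := hz₀max (zero_mem_Rset P hq₀)
    simpa [hF] using this
  set t : ℝ := F / (F + δ) with ht
  have htnn : 0 ≤ t := div_nonneg hFnn (by linarith)
  have htlt : t < 1 := by
    rw [ht, div_lt_one (by linarith)]; linarith
  have htF : F - t * F ≤ δ := by
    have h1 : t * F = F * F / (F + δ) := by rw [ht]; ring
    have h2 : F - t * F = F * δ / (F + δ) := by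
      rw [h1]; field_simp; ring
    rw [h2]
    rw [div_le_iff₀ (by linarith : (0:ℝ) < F + δ)]
    nlinarith
  set εs : Fin r → ℝ := fun i =>
    if 0 < P.mulVec z₀ i then q₀ i - t * P.mulVec z₀ i else 1 with hεs
  have hεspos : ∀ i, 0 < εs i := by
    intro i
    rw [hεs]
    by_cases hpi : 0 < P.mulVec z₀ i
    · simp only [hpi, if_true]
      have h1 : P.mulVec z₀ i ≤ q₀ i := hz₀mem i
      have h2 : t * P.mulVec z₀ i < P.mulVec z₀ i := by nlinarith
      linarith
    · simp [hpi]
  obtain ⟨ε, hεpos, hεle⟩ : ∃ ε > (0:ℝ), ∀ i, ε ≤ εs i := by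
    rcases isEmpty_or_nonempty (Fin r) with hr | hr
    · exact ⟨1, one_pos, fun i => isEmptyElim i⟩
    · refine ⟨Finset.univ.inf' ⟨Classical.arbitrary (Fin r), Finset.mem_univ _⟩ εs, ?_, ?_⟩
      · exact (Finset.lt_inf'_iff _).2 fun i _ => hεspos i
      · exact fun i => Finset.inf'_le _ (Finset.mem_univ i)
  refine ⟨ε, hεpos, fun q hq hqnear => ?_⟩
  have hmem : t • z₀ ∈ Rset P q := by
    intro i
    have hval : P.mulVec (t • z₀) i = t * P.mulVec z₀ i := by
      rw [Matrix.mulVec_smul]; simp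
    rw [hval]
    by_cases hpi : 0 < P.mulVec z₀ i
    · have hqi : |q i - q₀ i| < ε := by
        calc |q i - q₀ i| = ‖(q - q₀) i‖ := by simp [Real.norm_eq_abs]
          _ ≤ ‖q - q₀‖ := norm_le_pi_norm _ i
          _ < ε := hqnear
      have h1 : q₀ i - ε < q i := by
        have := abs_lt.mp hqi
        linarith [this.1]
      have h2 : εs i = q₀ i - t * P.mulVec z₀ i := by rw [hεs]; simp [hpi]
      have h3 : ε ≤ q₀ i - t * P.mulVec z₀ i := h2 ▸ hεle i
      linarith
    · push_neg at hpi
      have h0 : t * P.mulVec z₀ i ≤ 0 := mul_nonpos_of_nonneg_of_nonpos htnn hpi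
      have hqi0 : (0:ℝ) ≤ q i := hq i
      linarith
  have hdot : v ⬝ᵥ (t • z₀) = t * F := by
    rw [dotProduct_smul]; simp [hF]
  have := le_suppFn hP0 hq v hmem
  rw [hdot] at this
  rw [hsup]
  linarith

/-- Master continuity lemma. -/
lemma suppFn_continuousOn (hP0 : {z : Fin n → ℝ | P.mulVec z ≤ 0} = {0})
    (v : Fin n → ℝ) :
    ContinuousOn (fun q => suppFn (Rset P q) v) {q : Fin r → ℝ | 0 ≤ q} := by
  intro q₀ hq₀
  rw [Metric.continuousWithinAt_iff]
  intro ε hε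
  obtain ⟨ε₁, hε₁pos, hε₁le, hε₁⟩ := usc_one hP0 v hq₀ (half_pos hε)
  obtain ⟨ε₂, hε₂pos, hε₂⟩ := lsc hP0 v hq₀ (half_pos hε)
  refine ⟨min ε₁ ε₂, lt_min hε₁pos hε₂pos, fun q hq hqd => ?_⟩
  have hdist : ‖q - q₀‖ < min ε₁ ε₂ := by rwa [← dist_eq_norm]
  have hq' : 0 ≤ q := hq
  -- upper bound
  have hub : suppFn (Rset P q) v ≤ suppFn (Rset P q₀) v + ε/2 := by
    have hle : q ≤ q₀ + fun _ => ε₁ := by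
      intro i
      have h1 : |q i - q₀ i| < ε₁ := by
        calc |q i - q₀ i| = ‖(q - q₀) i‖ := by simp [Real.norm_eq_abs]
          _ ≤ ‖q - q₀‖ := norm_le_pi_norm _ i
          _ < min ε₁ ε₂ := hdist
          _ ≤ ε₁ := min_le_left _ _
      have := abs_lt.mp h1
      simp only [Pi.add_apply]
      linarith [this.2]
    have hq₀ε : 0 ≤ q₀ + fun _ => ε₁ := by
      intro i; simp only [Pi.add_apply]; have := hq₀ i; linarith
    calc suppFn (Rset P q) v ≤ suppFn (Rset P (q₀ + fun _ => ε₁)) v :=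
          suppFn_mono hP0 hq' hq₀ε hle v
      _ ≤ suppFn (Rset P q₀) v + ε/2 := hε₁
  -- lower bound
  have hlb : suppFn (Rset P q₀) v - ε/2 ≤ suppFn (Rset P q) v := by
    apply hε₂ q hq'
    exact hdist.trans_le (min_le_right _ _)
  rw [Real.dist_eq]
  rw [abs_lt]
  constructor <;> linarith

end Aux

/-- the functions `b` and `c` are continuous on the nonnegative orthant. -/
theorem bfun_cfun_continuousOn
    (n r : ℕ)
    (A : Matrix (Fin n) (Fin n) ℝ)
    (P : Matrix (Fin r) (Fin n) ℝ)
    (hspan : Submodule.span ℝ (Set.range fun i => P i) = ⊤)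
    (hP0 : {z : Fin n → ℝ | P.mulVec z ≤ 0} = {0}) :
    ContinuousOn (bfun P) {q : Fin r → ℝ | 0 ≤ q} ∧
    ContinuousOn (cfun A P) {q : Fin r → ℝ | 0 ≤ q} := by
  constructor
  · rw [continuousOn_pi]
    intro i
    exact suppFn_continuousOn hP0 (P i)
  · rw [continuousOn_pi]
    intro i
    have heq : (fun q => cfun A P q i)
        = fun q => suppFn (Rset P q) (Matrix.vecMul (P i) A) := by
      funext q
      simp only [cfun, suppFn]
      rw [Set.image_image]
      congr 1
      ext a
      constructor
      · rintro ⟨x, hx, rfl⟩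
        exact ⟨x, hx, (Matrix.dotProduct_mulVec _ _ _).symm⟩
      · rintro ⟨x, hx, rfl⟩
        exact ⟨x, hx, Matrix.dotProduct_mulVec _ _ _⟩
    rw [heq]
    exact suppFn_continuousOn hP0 (Matrix.vecMul (P i) A)
end

section
/- Let q ∈ ℝ^r have nonnegative entries. The set R(q) = {z ∈ ℝⁿ : P z ≤ q} is robust positively invariant for the system x⁺ = A x + w, w ∈ W (i.e., A x + w ∈ R(q) for all x ∈ R(q) and w ∈ W), if and only if c(q) + d ≤ b(q) componentwise. -/
/-!
Invariance of `R(q)` says `P_i (A x + w) ≤ q_i` for all `x ∈ R(q)`, `w ∈ W` and every `i`. The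
supremum of the left side over `x` and `w` splits as `c_i(q) + d_i`, and `b_i(q) ≤ q_i`, while
conversely `A x + w ∈ R(q)` forces `P_i (A x + w) ≤ b_i(q)`. All suprema involved are finite
because `W` and `R(q)` are compact: `‖(P z)⁺‖` is positively homogeneous and, as `P z ≤ 0` only
for `z = 0`, bounded below by `ε ‖z‖` on the unit sphere, hence everywhere.
-/

open Matrix

/-- `d_i = h(W, P_iᵀ)` where `W = {w : F w ≤ g}`. -/
noncomputable def dvec {n r p : ℕ} (F : Matrix (Fin p) (Fin n) ℝ) (g : Fin p → ℝ)
    (P : Matrix (Fin r) (Fin n) ℝ) : Fin r → ℝ :=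
  fun i => suppFn {w : Fin n → ℝ | F.mulVec w ≤ g} (P i)

/-- `R` is robust positively invariant for `x⁺ = A x + w`, `w ∈ W`. -/
def IsRPI {n : ℕ} (A : Matrix (Fin n) (Fin n) ℝ) (W R : Set (Fin n → ℝ)) : Prop :=
  ∀ x ∈ R, ∀ w ∈ W, A.mulVec x + w ∈ R

open Set Bornology

theorem exists_pos_mul_norm_le_of_homogeneous {E : Type*} [NormedAddCommGroup E]
    [NormedSpace ℝ E] [FiniteDimensional ℝ E] {G : E → ℝ} (hG : Continuous G)
    (hhom : ∀ c : ℝ, 0 ≤ c → ∀ z, G (c • z) = c * G z) (hpos : ∀ z ≠ 0, 0 < G z) :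
    ∃ ε > 0, ∀ z, ε * ‖z‖ ≤ G z := by
  have hG0 : G 0 = 0 := by simpa using hhom 0 le_rfl 0
  cases subsingleton_or_nontrivial E with
  | inl _ => exact ⟨1, one_pos, fun z => by simp [Subsingleton.elim z 0, hG0]⟩
  | inr _ =>
    obtain ⟨z₀, hz₀, hmin⟩ := (isCompact_sphere (0 : E) 1).exists_isMinOn
      (NormedSpace.sphere_nonempty.2 zero_le_one) hG.continuousOn
    refine ⟨G z₀, hpos z₀ (ne_zero_of_mem_unit_sphere ⟨z₀, hz₀⟩), fun z => ?_⟩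
    rcases eq_or_ne z 0 with rfl | hz
    · simp [hG0]
    have hnorm : 0 < ‖z‖ := norm_pos_iff.2 hz
    have hunit : ‖z‖⁻¹ • z ∈ Metric.sphere (0 : E) 1 := by
      simp [norm_smul, hnorm.ne']
    calc G z₀ * ‖z‖ ≤ G (‖z‖⁻¹ • z) * ‖z‖ := by gcongr; exact hmin hunit
      _ = G z := by rw [hhom _ (inv_nonneg.2 hnorm.le)]; field_simp

section Polyhedron

variable {ι κ : Type*} [Fintype ι] [Fintype κ] {P : Matrix ι κ ℝ}

theorem isBounded_setOf_mulVec_le (hP0 : {z | P *ᵥ z ≤ 0} = {0}) (q : ι → ℝ) :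
    IsBounded {z | P *ᵥ z ≤ q} := by
  have hsmul : ∀ c : ℝ, 0 ≤ c → ∀ v : ι → ℝ, (c • v)⁺ = c • v⁺ := fun c hc v => by
    ext i; simp [posPart, mul_max_of_nonneg _ _ hc]
  obtain ⟨ε, hε, hG⟩ := exists_pos_mul_norm_le_of_homogeneous (G := fun z => ‖(P *ᵥ z)⁺‖)
    (continuous_pi fun i => ((continuous_apply i).comp
      (continuous_const.matrix_mulVec continuous_id)).max continuous_const).norm
    (fun c hc z => by rw [mulVec_smul, hsmul c hc, norm_smul, Real.norm_of_nonneg hc])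
    (fun z hz => norm_pos_iff.2 fun h => hz (by
      rw [← mem_singleton_iff, ← hP0]; exact posPart_eq_zero.1 h))
  refine (Metric.isBounded_closedBall (x := 0) (r := ‖q⁺‖ / ε)).subset fun z hz => ?_
  rw [Metric.mem_closedBall, dist_zero_right, le_div_iff₀' hε]
  refine (hG z).trans ((pi_norm_le_iff_of_nonneg (norm_nonneg _)).2 fun i => ?_)
  refine le_trans ?_ (norm_le_pi_norm q⁺ i)
  simp only [Pi.posPart_apply, Real.norm_eq_abs, abs_of_nonneg (posPart_nonneg _)]
  exact posPart_mono (hz i)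

theorem isCompact_setOf_mulVec_le (hP0 : {z | P *ᵥ z ≤ 0} = {0}) (q : ι → ℝ) :
    IsCompact {z | P *ᵥ z ≤ q} :=
  Metric.isCompact_of_isClosed_isBounded
    (isClosed_le (continuous_const.matrix_mulVec continuous_id) continuous_const)
    (isBounded_setOf_mulVec_le hP0 q)

end Polyhedron

section SupportFunction

variable {n : ℕ} {X Y : Set (Fin n → ℝ)} {v : Fin n → ℝ}

theorem IsCompact.dotProduct_le_suppFn (hX : IsCompact X) {x : Fin n → ℝ} (hx : x ∈ X) :
    v ⬝ᵥ x ≤ suppFn X v :=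
  le_csSup (hX.image (continuous_const.dotProduct continuous_id)).bddAbove (mem_image_of_mem _ hx)

theorem suppFn_le (hX : X.Nonempty) {a : ℝ} (h : ∀ x ∈ X, v ⬝ᵥ x ≤ a) : suppFn X v ≤ a :=
  csSup_le (hX.image _) (forall_mem_image.2 h)

theorem suppFn_add_suppFn_le (hX : X.Nonempty) (hY : Y.Nonempty) {a : ℝ}
    (h : ∀ x ∈ X, ∀ y ∈ Y, v ⬝ᵥ x + v ⬝ᵥ y ≤ a) : suppFn X v + suppFn Y v ≤ a := by
  have : suppFn X v ≤ a - suppFn Y v := suppFn_le hX fun x hx =>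
    le_sub_comm.1 (suppFn_le hY fun y hy => by linarith [h x hx y hy])
  linarith

end SupportFunction

theorem rpi_iff_support_ineq_general
    (n r p : ℕ)
    (A : Matrix (Fin n) (Fin n) ℝ)
    (F : Matrix (Fin p) (Fin n) ℝ) (g : Fin p → ℝ)
    (hg : ∀ j, 0 < g j)
    (W : Set (Fin n → ℝ)) (hW : W = {w : Fin n → ℝ | F.mulVec w ≤ g})
    (hWcompact : IsCompact W)
    (P : Matrix (Fin r) (Fin n) ℝ)
    (hP0 : {z : Fin n → ℝ | P.mulVec z ≤ 0} = {0})
    (q : Fin r → ℝ) (hq : 0 ≤ q) :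
    IsRPI A W (Rset P q) ↔ cfun A P q + dvec F g P ≤ bfun P q := by
  have hR : IsCompact (Rset P q) := isCompact_setOf_mulVec_le hP0 q
  have h0R : (0 : Fin n → ℝ) ∈ Rset P q := by simpa [Rset] using hq
  have h0W : (0 : Fin n → ℝ) ∈ W := by
    rw [hW, mem_ofPred_eq, mulVec_zero]; exact fun j => (hg j).le
  have hd : dvec F g P = fun i => suppFn W (P i) := by rw [hW]; rfl
  rw [hd]
  constructor
  · intro hRPI i
    refine suppFn_add_suppFn_le (Nonempty.image _ ⟨0, h0R⟩) ⟨0, h0W⟩ ?_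
    rintro _ ⟨x, hx, rfl⟩ w hw
    rw [← dotProduct_add]
    exact hR.dotProduct_le_suppFn (hRPI x hx w hw)
  · intro hle x hx w hw i
    have hAR : IsCompact (A.mulVec '' Rset P q) :=
      hR.image (continuous_const.matrix_mulVec continuous_id)
    calc (P *ᵥ (A *ᵥ x + w)) i = P i ⬝ᵥ A *ᵥ x + P i ⬝ᵥ w := by rw [mulVec_add]; rfl
      _ ≤ cfun A P q i + suppFn W (P i) :=
        add_le_add (hAR.dotProduct_le_suppFn (mem_image_of_mem _ hx))
          (hWcompact.dotProduct_le_suppFn hw)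
      _ ≤ bfun P q i := hle i
      _ ≤ q i := suppFn_le ⟨0, h0R⟩ fun z hz => hz i

/-- `R(q)` is RPI for `x⁺ = A x + w`, `w ∈ W`, iff `c(q) + d ≤ b(q)`
componentwise. -/
theorem rpi_iff_support_ineq
    (n r p : ℕ)
    (A : Matrix (Fin n) (Fin n) ℝ)
    (F : Matrix (Fin p) (Fin n) ℝ) (g : Fin p → ℝ)
    (hg : ∀ j, 0 < g j)
    (W : Set (Fin n → ℝ)) (hW : W = {w : Fin n → ℝ | F.mulVec w ≤ g})
    (hWcompact : IsCompact W)
    (P : Matrix (Fin r) (Fin n) ℝ)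
    (hspan : Submodule.span ℝ (Set.range fun i => P i) = ⊤)
    (hP0 : {z : Fin n → ℝ | P.mulVec z ≤ 0} = {0})
    (q : Fin r → ℝ) (hq : 0 ≤ q) :
    IsRPI A W (Rset P q) ↔ cfun A P q + dvec F g P ≤ bfun P q :=
  rpi_iff_support_ineq_general n r p A F g hg W hW hWcompact P hP0 q hq
end

section
/- There exists q* ∈ ℝ^r with nonnegative entries satisfying the fixed-point equation c(q*) + d = b(q*) = q* if and only if there exists q̄ ∈ ℝ^r with strictly positive entries such that R(q̄) is robust positively invariant for x⁺ = A x + w, w ∈ W. Moreover, when such q̄ exists, a fixed point q* can be found with 0 ≤ q* ≤ q̄ componentwise. -/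
open Matrix

section Helpers

lemma continuous_dot' {n : ℕ} (v : Fin n → ℝ) : Continuous fun x : Fin n → ℝ => v ⬝ᵥ x := by
  unfold dotProduct
  exact continuous_finset_sum _ fun i _ => (continuous_const.mul (continuous_apply i))

lemma bddAbove_dot_image' {n : ℕ} (v : Fin n → ℝ) {S : Set (Fin n → ℝ)} {C : ℝ}
    (hC : ∀ x ∈ S, ‖x‖ ≤ C) : BddAbove ((fun x => v ⬝ᵥ x) '' S) := by
  refine ⟨(∑ i, |v i|) * C, ?_⟩
  rintro _ ⟨x, hx, rfl⟩
  calc v ⬝ᵥ x ≤ ∑ i, |v i| * C := by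
        refine Finset.sum_le_sum fun i _ => ?_
        calc v i * x i ≤ |v i * x i| := le_abs_self _
          _ = |v i| * |x i| := abs_mul _ _
          _ ≤ |v i| * C := by
              refine mul_le_mul_of_nonneg_left ?_ (abs_nonneg _)
              exact le_trans (by simpa using norm_le_pi_norm x i) (hC x hx)
    _ = (∑ i, |v i|) * C := (Finset.sum_mul ..).symm

lemma dot_split' {n r : ℕ} (P : Matrix (Fin r) (Fin n) ℝ) (A : Matrix (Fin n) (Fin n) ℝ)
    (x w : Fin n → ℝ) (i : Fin r) :
    P.mulVec (A.mulVec x + w) i = vecMul (P i) A ⬝ᵥ x + P i ⬝ᵥ w := by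
  show P i ⬝ᵥ (A.mulVec x + w) = _
  rw [dotProduct_add, dotProduct_mulVec]

lemma le_suppFn' {n : ℕ} {S : Set (Fin n → ℝ)} {v x : Fin n → ℝ}
    (hb : BddAbove ((fun y => v ⬝ᵥ y) '' S)) (hx : x ∈ S) :
    v ⬝ᵥ x ≤ suppFn S v := le_csSup hb ⟨x, hx, rfl⟩

lemma suppFn_le' {n : ℕ} {S : Set (Fin n → ℝ)} {v : Fin n → ℝ} {t : ℝ}
    (hS : S.Nonempty) (h : ∀ x ∈ S, v ⬝ᵥ x ≤ t) : suppFn S v ≤ t :=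
  csSup_le (hS.image _) (by rintro _ ⟨x, hx, rfl⟩; exact h x hx)

lemma suppFn_mono' {n : ℕ} {S T : Set (Fin n → ℝ)} {v : Fin n → ℝ}
    (hS : S.Nonempty) (hb : BddAbove ((fun y => v ⬝ᵥ y) '' T)) (hST : S ⊆ T) :
    suppFn S v ≤ suppFn T v :=
  csSup_le_csSup hb (hS.image _) (Set.image_mono (f := fun y => v ⬝ᵥ y) hST)

lemma suppFn_add_le_iff' {n : ℕ} {S T : Set (Fin n → ℝ)} {u v : Fin n → ℝ} {t : ℝ}
    (hS : S.Nonempty) (hT : T.Nonempty)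
    (hbS : BddAbove ((fun y => u ⬝ᵥ y) '' S)) (hbT : BddAbove ((fun y => v ⬝ᵥ y) '' T)) :
    suppFn S u + suppFn T v ≤ t ↔ ∀ x ∈ S, ∀ w ∈ T, u ⬝ᵥ x + v ⬝ᵥ w ≤ t := by
  constructor
  · intro h x hx w hw
    exact le_trans (add_le_add (le_suppFn' hbS hx) (le_suppFn' hbT hw)) h
  · intro h
    have h1 : suppFn S u ≤ t - suppFn T v := by
      refine suppFn_le' hS fun x hx => ?_
      have h2 : suppFn T v ≤ t - u ⬝ᵥ x :=
        suppFn_le' hT fun w hw => by linarith [h x hx w hw]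
      linarith
    linarith

lemma cfun_eq' {n r : ℕ} (A : Matrix (Fin n) (Fin n) ℝ) (P : Matrix (Fin r) (Fin n) ℝ)
    (q : Fin r → ℝ) (i : Fin r) :
    cfun A P q i = suppFn (Rset P q) (vecMul (P i) A) := by
  unfold cfun suppFn
  rw [Set.image_image]
  simp only [dotProduct_mulVec]

lemma Rset_bound' {n r : ℕ} (P : Matrix (Fin r) (Fin n) ℝ)
    (hP0 : {z : Fin n → ℝ | P.mulVec z ≤ 0} = {0}) (q : Fin r → ℝ) :
    ∃ C : ℝ, ∀ x ∈ Rset P q, ‖x‖ ≤ C := by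
  rcases Nat.eq_zero_or_pos n with hn | hn
  · refine ⟨0, fun x _ => ?_⟩
    subst hn
    have : x = 0 := Subsingleton.elim x 0
    simp [this]
  · set f : (Fin n → ℝ) → ℝ := fun z => ∑ i, max (P.mulVec z i) 0 with hf
    have hfc : Continuous f := by
      apply continuous_finset_sum
      intro i _
      exact ((continuous_dot' (P i)).max continuous_const)
    haveI : Nonempty (Fin n) := ⟨⟨0, hn⟩⟩
    have hsph : (Metric.sphere (0 : Fin n → ℝ) 1).Nonempty := by
      refine ⟨fun _ => 1, ?_⟩
      simp [Metric.mem_sphere, dist_zero_right, pi_norm_const]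
    obtain ⟨z₀, hz₀, hmin⟩ := (isCompact_sphere (0 : Fin n → ℝ) 1).exists_isMinOn hsph
      hfc.continuousOn
    have hfpos : ∀ z : Fin n → ℝ, ‖z‖ = 1 → 0 < f z := by
      intro z hz
      have h0 : 0 ≤ f z := Finset.sum_nonneg fun i _ => le_max_right _ _
      rcases h0.lt_or_eq with h | h
      · exact h
      · exfalso
        have hall : P.mulVec z ≤ 0 := by
          intro i
          have hz2 := (Finset.sum_eq_zero_iff_of_nonneg
            (fun i _ => le_max_right (P.mulVec z i) 0)).mp h.symm i (Finset.mem_univ i)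
          have : P.mulVec z i ≤ 0 := max_eq_right_iff.mp hz2
          simpa using this
        have hz0 : z ∈ ({0} : Set (Fin n → ℝ)) := hP0 ▸ (Set.mem_setOf.mpr hall)
        simp only [Set.mem_singleton_iff] at hz0
        rw [hz0] at hz
        simp at hz
    have hz₀n : ‖z₀‖ = 1 := by simpa [Metric.mem_sphere, dist_zero_right] using hz₀
    have hm : 0 < f z₀ := hfpos z₀ hz₀n
    set Q := ∑ i, max (q i) 0 with hQ
    refine ⟨max 0 (Q / f z₀), fun x hx => ?_⟩
    rcases eq_or_ne x 0 with rfl | hx0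
    · simp
    · have hxn : 0 < ‖x‖ := norm_pos_iff.mpr hx0
      have hmem : (‖x‖⁻¹ • x) ∈ Metric.sphere (0 : Fin n → ℝ) 1 := by
        simp [Metric.mem_sphere, dist_zero_right, norm_smul, abs_of_pos (inv_pos.mpr hxn),
          inv_mul_cancel₀ hxn.ne']
      have h1 : f z₀ ≤ f (‖x‖⁻¹ • x) := hmin hmem
      have h2 : f (‖x‖⁻¹ • x) = ‖x‖⁻¹ * f x := by
        simp only [hf]
        rw [Finset.mul_sum]
        refine Finset.sum_congr rfl fun i _ => ?_
        rw [Matrix.mulVec_smul]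
        have : (‖x‖⁻¹ • P.mulVec x) i = ‖x‖⁻¹ * P.mulVec x i := rfl
        rw [this, mul_max_of_nonneg _ _ (inv_nonneg.mpr hxn.le), mul_zero]
      have h3 : f x ≤ Q := by
        refine Finset.sum_le_sum fun i _ => max_le_max (hx i) le_rfl
      have h4 : f z₀ * ‖x‖ ≤ Q := by
        have := h1.trans_eq h2
        calc f z₀ * ‖x‖ ≤ (‖x‖⁻¹ * f x) * ‖x‖ := by nlinarith
          _ = f x := by field_simp
          _ ≤ Q := h3
      have : ‖x‖ ≤ Q / f z₀ := (le_div_iff₀ hm).mpr (by linarith)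
      exact this.trans (le_max_right _ _)

end Helpers


/-- a nonnegative fixed point `q*` of `c(q) + d = b(q) = q` exists iff
some `R(q̄)` with `q̄ > 0` is RPI; moreover, when such a `q̄` exists, a fixed point
can be found with `0 ≤ q* ≤ q̄`. -/
theorem exists_fixedPoint_iff_exists_rpi
    (n r p : ℕ)
    (A : Matrix (Fin n) (Fin n) ℝ)
    (hA : spectralRadius ℂ (A.map Complex.ofReal) < 1)
    (F : Matrix (Fin p) (Fin n) ℝ) (g : Fin p → ℝ)
    (hg : ∀ j, 0 < g j)
    (W : Set (Fin n → ℝ)) (hW : W = {w : Fin n → ℝ | F.mulVec w ≤ g})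
    (hWcompact : IsCompact W)
    (P : Matrix (Fin r) (Fin n) ℝ)
    (hspan : Submodule.span ℝ (Set.range fun i => P i) = ⊤)
    (hP0 : {z : Fin n → ℝ | P.mulVec z ≤ 0} = {0}) :
    ((∃ qs : Fin r → ℝ, 0 ≤ qs ∧
        cfun A P qs + dvec F g P = bfun P qs ∧ bfun P qs = qs) ↔
      (∃ qbar : Fin r → ℝ, (∀ i, 0 < qbar i) ∧ IsRPI A W (Rset P qbar))) ∧
    (∀ qbar : Fin r → ℝ, (∀ i, 0 < qbar i) → IsRPI A W (Rset P qbar) →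
      ∃ qs : Fin r → ℝ, 0 ≤ qs ∧ qs ≤ qbar ∧
        cfun A P qs + dvec F g P = bfun P qs ∧ bfun P qs = qs) := by
  classical
  -- Notation
  set W' : Set (Fin n → ℝ) := {w : Fin n → ℝ | F.mulVec w ≤ g} with hW'def
  have hW' : W = W' := hW
  have h0W : (0 : Fin n → ℝ) ∈ W' := by
    show F.mulVec 0 ≤ g
    rw [Matrix.mulVec_zero]
    exact fun j => (hg j).le
  have hW'ne : W'.Nonempty := ⟨0, h0W⟩
  have hbW : ∀ v : Fin n → ℝ, BddAbove ((fun y => v ⬝ᵥ y) '' W') := by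
    intro v
    rw [← hW']
    exact ((hWcompact.image (continuous_dot' v)).bddAbove)
  have hRzero : ∀ q : Fin r → ℝ, 0 ≤ q → (0 : Fin n → ℝ) ∈ Rset P q := by
    intro q hq
    show P.mulVec 0 ≤ q
    rw [Matrix.mulVec_zero]
    exact hq
  have hRne : ∀ q : Fin r → ℝ, 0 ≤ q → (Rset P q).Nonempty := fun q hq => ⟨0, hRzero q hq⟩
  have hRbdd : ∀ (q : Fin r → ℝ) (v : Fin n → ℝ),
      BddAbove ((fun y => v ⬝ᵥ y) '' Rset P q) := by
    intro q v
    obtain ⟨C, hC⟩ := Rset_bound' P hP0 q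
    exact bddAbove_dot_image' v hC
  have hRmono : ∀ q q' : Fin r → ℝ, q ≤ q' → Rset P q ⊆ Rset P q' :=
    fun q q' h x hx i => (hx i).trans (h i)
  have hdnonneg : ∀ i, 0 ≤ dvec F g P i := by
    intro i
    have := le_suppFn' (hbW (P i)) h0W
    exact (by simpa using this : (0:ℝ) ≤ suppFn W' (P i))
  set Φ : (Fin r → ℝ) → (Fin r → ℝ) := fun q => cfun A P q + dvec F g P with hΦdef
  have hΦ_apply : ∀ (q : Fin r → ℝ) (i : Fin r),
      Φ q i = suppFn (Rset P q) (vecMul (P i) A) + suppFn W' (P i) := by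
    intro q i
    show cfun A P q i + dvec F g P i = _
    rw [cfun_eq']
    rfl
  have hkey : ∀ q t : Fin r → ℝ, 0 ≤ q →
      (Φ q ≤ t ↔ ∀ x ∈ Rset P q, ∀ w ∈ W', ∀ i, P.mulVec (A.mulVec x + w) i ≤ t i) := by
    intro q t hq
    have hcomp : ∀ i, (Φ q i ≤ t i ↔
        ∀ x ∈ Rset P q, ∀ w ∈ W', P.mulVec (A.mulVec x + w) i ≤ t i) := by
      intro i
      rw [hΦ_apply,
        suppFn_add_le_iff' (hRne q hq) hW'ne (hRbdd q _) (hbW _)]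
      constructor
      · intro h x hx w hw
        rw [dot_split']
        exact h x hx w hw
      · intro h x hx w hw
        rw [← dot_split']
        exact h x hx w hw
    constructor
    · intro h x hx w hw i
      exact (hcomp i).mp (h i) x hx w hw
    · intro h i
      exact (hcomp i).mpr (fun x hx w hw => h x hx w hw i) 
  have hΦmono : ∀ q q' : Fin r → ℝ, 0 ≤ q → q ≤ q' → Φ q ≤ Φ q' := by
    intro q q' hq hle i
    rw [hΦ_apply, hΦ_apply]
    have := suppFn_mono' (v := vecMul (P i) A) (hRne q hq) (hRbdd q' _) (hRmono q q' hle)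
    linarith
  have hΦnonneg : ∀ q : Fin r → ℝ, 0 ≤ q → 0 ≤ Φ q := by
    intro q hq i
    rw [hΦ_apply]
    have h1 := le_suppFn' (v := vecMul (P i) A) (hRbdd q _) (hRzero q hq)
    have h2 := le_suppFn' (v := P i) (hbW (P i)) h0W
    simp only [dotProduct_zero] at h1 h2
    show (0:ℝ) ≤ _ + _
    linarith
  -- bfun basic facts
  have hble : ∀ q : Fin r → ℝ, 0 ≤ q → bfun P q ≤ q := by
    intro q hq i
    exact suppFn_le' (hRne q hq) (fun x hx => hx i)
  -- MAIN: part 2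
  have main : ∀ qbar : Fin r → ℝ, (∀ i, 0 < qbar i) → IsRPI A W (Rset P qbar) →
      ∃ qs : Fin r → ℝ, 0 ≤ qs ∧ qs ≤ qbar ∧
        cfun A P qs + dvec F g P = bfun P qs ∧ bfun P qs = qs := by
    intro qbar hpos hrpi
    have hqbar0 : (0 : Fin r → ℝ) ≤ qbar := fun i => (hpos i).le
    have hqbarS : Φ qbar ≤ qbar := by
      rw [hkey qbar qbar hqbar0]
      intro x hx w hw i
      exact (hrpi x hx w (by rw [hW']; exact hw)) i
    set S : Set (Fin r → ℝ) := {q | 0 ≤ q ∧ q ≤ qbar ∧ Φ q ≤ q} with hSdef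
    have hqbarmem : qbar ∈ S := ⟨hqbar0, le_rfl, hqbarS⟩
    have hSne : S.Nonempty := ⟨qbar, hqbarmem⟩
    set qs : Fin r → ℝ := fun i => sInf ((fun q : Fin r → ℝ => q i) '' S) with hqsdef
    have hbddS : ∀ i, BddBelow ((fun q : Fin r → ℝ => q i) '' S) := by
      intro i
      refine ⟨0, ?_⟩
      rintro _ ⟨q, hqS, rfl⟩
      exact hqS.1 i
    have hqs_le : ∀ q ∈ S, qs ≤ q := fun q hqS i => csInf_le (hbddS i) ⟨q, hqS, rfl⟩
    have hqs_nonneg : (0 : Fin r → ℝ) ≤ qs := by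
      intro i
      refine le_csInf (hSne.image _) ?_
      rintro _ ⟨q, hqS, rfl⟩
      exact hqS.1 i
    have hqs_le_qbar : qs ≤ qbar := hqs_le qbar hqbarmem
    have hΦqs_le : Φ qs ≤ qs := by
      intro i
      refine le_csInf (hSne.image _) ?_
      rintro _ ⟨q, hqS, rfl⟩
      exact le_trans (hΦmono qs q hqs_nonneg (hqs_le q hqS) i) (hqS.2.2 i)
    have hΦqs_mem : Φ qs ∈ S :=
      ⟨hΦnonneg qs hqs_nonneg, le_trans hΦqs_le hqs_le_qbar,
        hΦmono _ _ (hΦnonneg qs hqs_nonneg) hΦqs_le⟩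
    have hfix : Φ qs = qs := le_antisymm hΦqs_le (hqs_le _ hΦqs_mem)
    have hrpi_qs : ∀ x ∈ Rset P qs, ∀ w ∈ W', A.mulVec x + w ∈ Rset P qs := by
      have := (hkey qs qs hqs_nonneg).mp (le_of_eq hfix)
      exact fun x hx w hw i => this x hx w hw i
    have hqs_le_b : qs ≤ bfun P qs := by
      intro i
      have h : suppFn (Rset P qs) (vecMul (P i) A) + suppFn W' (P i) ≤ bfun P qs i := by
        rw [suppFn_add_le_iff' (hRne qs hqs_nonneg) hW'ne (hRbdd qs _) (hbW _)]
        intro x hx w hw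
        rw [← dot_split']
        exact le_suppFn' (hRbdd qs (P i)) (hrpi_qs x hx w hw)
      calc qs i = Φ qs i := by rw [hfix]
        _ = _ := hΦ_apply qs i
        _ ≤ bfun P qs i := h
    have hb_eq : bfun P qs = qs := le_antisymm (hble qs hqs_nonneg) hqs_le_b
    exact ⟨qs, hqs_nonneg, hqs_le_qbar, by rw [hb_eq]; exact hfix, hb_eq⟩
  refine ⟨⟨?_, ?_⟩, main⟩
  · -- forward: fixed point → positive qbar with RPI
    rintro ⟨qs, hqs0, heq1, heq2⟩
    have hfix : Φ qs = qs := heq1.trans heq2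
    have hrpi_qs : ∀ x ∈ Rset P qs, ∀ w ∈ W', A.mulVec x + w ∈ Rset P qs := by
      have := (hkey qs qs hqs0).mp (le_of_eq hfix)
      exact fun x hx w hw i => this x hx w hw i
    have hdpos : ∀ i, P i ≠ 0 → 0 < dvec F g P i := by
      intro i hi
      set v : Fin p → ℝ := F.mulVec (P i) with hvdef
      set Sv : ℝ := ∑ j, (g j)⁻¹ * |v j| with hSvdef
      have hSv : 0 ≤ Sv := Finset.sum_nonneg fun j _ =>
        mul_nonneg (inv_nonneg.mpr (hg j).le) (abs_nonneg _)
      have hε : 0 < (Sv + 1)⁻¹ := inv_pos.mpr (by linarith)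
      have hmem : (Sv + 1)⁻¹ • (P i) ∈ W' := by
        intro j
        rw [Matrix.mulVec_smul]
        show (Sv + 1)⁻¹ * v j ≤ g j
        have h2 : (g j)⁻¹ * |v j| ≤ Sv :=
          Finset.single_le_sum (f := fun j => (g j)⁻¹ * |v j|)
            (fun k _ => mul_nonneg (inv_nonneg.mpr (hg k).le) (abs_nonneg _))
            (Finset.mem_univ j)
        have h1 : v j ≤ g j * Sv := by
          calc v j ≤ |v j| := le_abs_self _
            _ = g j * ((g j)⁻¹ * |v j|) := by
                rw [← mul_assoc, mul_inv_cancel₀ (hg j).ne', one_mul]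
            _ ≤ g j * Sv := mul_le_mul_of_nonneg_left h2 (hg j).le
        have h3 : Sv * (Sv + 1)⁻¹ ≤ 1 := by
          rw [← div_eq_mul_inv]
          exact (div_le_one (by linarith)).mpr (by linarith)
        calc (Sv + 1)⁻¹ * v j ≤ (Sv + 1)⁻¹ * (g j * Sv) :=
              mul_le_mul_of_nonneg_left h1 hε.le
          _ = g j * (Sv * (Sv + 1)⁻¹) := by ring
          _ ≤ g j * 1 := mul_le_mul_of_nonneg_left h3 (hg j).le
          _ = g j := mul_one _
      have hPP : 0 < P i ⬝ᵥ P i := by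
        obtain ⟨j, hj⟩ := Function.ne_iff.mp hi
        refine Finset.sum_pos' (fun k _ => mul_self_nonneg _)
          ⟨j, Finset.mem_univ j, ?_⟩
        have : P i j ≠ 0 := by simpa using hj
        exact mul_self_pos.mpr this
      have hdot : 0 < P i ⬝ᵥ ((Sv + 1)⁻¹ • P i) := by
        rw [dotProduct_smul, smul_eq_mul]
        exact mul_pos hε hPP
      exact lt_of_lt_of_le hdot (le_suppFn' (hbW (P i)) hmem)
    have hqspos : ∀ i, P i ≠ 0 → 0 < qs i := by
      intro i hi
      have hc : 0 ≤ cfun A P qs i := by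
        rw [cfun_eq']
        have := le_suppFn' (v := vecMul (P i) A) (hRbdd qs _) (hRzero qs hqs0)
        simpa using this
      have hd := hdpos i hi
      have h4 : cfun A P qs i + dvec F g P i = qs i := congrFun hfix i
      linarith
    refine ⟨fun i => if P i = 0 then 1 else qs i, ?_, ?_⟩
    · intro i
      by_cases h : P i = 0
      · simp [h]
      · simp only [h, if_false]
        exact hqspos i h
    · have hReq : Rset P (fun i => if P i = 0 then 1 else qs i) = Rset P qs := by
        ext z
        constructor
        · intro hz i
          by_cases h : P i = 0
          · show P i ⬝ᵥ z ≤ qs i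
            rw [h, zero_dotProduct]
            exact hqs0 i
          · have := hz i
            simpa [h] using this
        · intro hz i
          by_cases h : P i = 0
          · show P i ⬝ᵥ z ≤ (if P i = 0 then (1:ℝ) else qs i)
            rw [h, zero_dotProduct]
            simp [h]
          · show P i ⬝ᵥ z ≤ (if P i = 0 then (1:ℝ) else qs i)
            simp only [h, if_false]
            exact hz i
      rw [hReq]
      intro x hx w hw
      exact hrpi_qs x hx w (by rw [← hW']; exact hw)
  · rintro ⟨qbar, hpos, hrpi⟩
    obtain ⟨qs, h0, _, h1, h2⟩ := main qbar hpos hrpi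
    exact ⟨qs, h0, h1, h2⟩
end
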